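/- Mosco-type closedness: if energy sets Ω_n weak-γ-converge to Ω (i.e. w_{Ω_n} → w in L²(X,m) and Ω = {w > 0}), and u_n ∈ H₀(Ω_n) is a sequence bounded in H converging strongly in L²(X,m) to u ∈ H, then u ∈ H₀(Ω). -/

import Mathlib

open MeasureTheory Filter
open scoped ENNReal

namespace AbsSob

variable {X : Type*} [MeasurableSpace X]

/-- Abstract Sobolev setting: a Riesz subspace `H` of `L²(X,m)` with the Stone
property (H1)-(H2), together with a gradient-like map `D` satisfying (D1)-(D4). -/
structure Setting (X : Type*) [MeasurableSpace X] (m : Measure X) where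
  H : Set (X → ℝ)
  D : (X → ℝ) → X → ℝ
  zero_mem : (fun _ => (0 : ℝ)) ∈ H
  add_mem : ∀ ⦃u v : X → ℝ⦄, u ∈ H → v ∈ H → u + v ∈ H
  smul_mem : ∀ (c : ℝ) ⦃u : X → ℝ⦄, u ∈ H → c • u ∈ H
  sup_mem : ∀ ⦃u v : X → ℝ⦄, u ∈ H → v ∈ H → u ⊔ v ∈ H
  inf_mem : ∀ ⦃u v : X → ℝ⦄, u ∈ H → v ∈ H → u ⊓ v ∈ H
  stone : ∀ ⦃u : X → ℝ⦄, u ∈ H → u ⊓ 1 ∈ H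
  memL2 : ∀ ⦃u : X → ℝ⦄, u ∈ H → MemLp u 2 m
  gradL2 : ∀ ⦃u : X → ℝ⦄, u ∈ H → MemLp (D u) 2 m
  D1 : ∀ ⦃u : X → ℝ⦄, u ∈ H → ∀ᵐ x ∂m, 0 ≤ D u x
  D2 : ∀ ⦃u v : X → ℝ⦄, u ∈ H → v ∈ H → ∀ᵐ x ∂m, D (u + v) x ≤ D u x + D v x
  D3 : ∀ (c : ℝ) ⦃u : X → ℝ⦄, u ∈ H → ∀ᵐ x ∂m, D (c • u) x = |c| * D u x
  D4 : ∀ ⦃u v : X → ℝ⦄, u ∈ H → v ∈ H → ∀ᵐ x ∂m,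
      D (u ⊔ v) x = if v x < u x then D u x else D v x

variable {m : Measure X}

/-- Square of the `H`-norm: `‖u‖_H² = ‖u‖²_{L²} + ‖Du‖²_{L²}`. -/
noncomputable def normHsq (S : Setting X m) (u : X → ℝ) : ℝ :=
  ∫ x, (u x) ^ 2 ∂m + ∫ x, (S.D u x) ^ 2 ∂m

/-- Sobolev functions vanishing (m-a.e.) outside `Ω`. -/
def H0 (S : Setting X m) (Ω : Set X) : Set (X → ℝ) :=
  {u | u ∈ S.H ∧ ∀ᵐ x ∂m, x ∉ Ω → u x = 0}

/-- The functional `F^{a,f}(u) = ½∫|Du|² + (a/2)∫u² − ∫ f u`. -/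
noncomputable def F (S : Setting X m) (a : ℝ) (f : X → ℝ) (u : X → ℝ) : ℝ :=
  (1 / 2) * ∫ x, (S.D u x) ^ 2 ∂m + (a / 2) * ∫ x, (u x) ^ 2 ∂m - ∫ x, f x * u x ∂m

/-- `w` is a minimizer of `F^{a,f}` over `H₀(Ω)`. -/
def IsMinimizer (S : Setting X m) (Ω : Set X) (a : ℝ) (f : X → ℝ) (w : X → ℝ) : Prop :=
  w ∈ H0 S Ω ∧ ∀ u ∈ H0 S Ω, F S a f w ≤ F S a f u

/-- (ℋ2): the inclusion `H ↪ L²` is compact. -/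
def CompactEmbedding (S : Setting X m) : Prop :=
  ∀ u : ℕ → X → ℝ, (∀ n, u n ∈ S.H) → (∃ C : ℝ, ∀ n, normHsq S (u n) ≤ C) →
    ∃ (φ : ℕ → ℕ) (v : X → ℝ), StrictMono φ ∧ v ∈ S.H ∧
      Tendsto (fun k => ∫ x, (u (φ k) x - v x) ^ 2 ∂m) atTop (nhds 0)

/-- (ℋ3): lower semicontinuity of the gradient energy along `L²`-convergent
`H`-bounded sequences, whose limit moreover belongs to `H`. -/
def GradLSC (S : Setting X m) : Prop :=
  ∀ (u : ℕ → X → ℝ) (v : X → ℝ), (∀ n, u n ∈ S.H) →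
    (∃ C : ℝ, ∀ n, normHsq S (u n) ≤ C) →
    Tendsto (fun n => ∫ x, (u n x - v x) ^ 2 ∂m) atTop (nhds 0) →
    v ∈ S.H ∧ ∫ x, (S.D v x) ^ 2 ∂m ≤ liminf (fun n => ∫ x, (S.D (u n) x) ^ 2 ∂m) atTop

/-- Energy sets: Borel sets coinciding up to an `m`-null set with `{w_Ω > 0}`. -/
def IsEnergySet (S : Setting X m) (Ω : Set X) : Prop :=
  MeasurableSet Ω ∧ ∃ w, IsMinimizer S Ω 1 (fun _ => 1) w ∧ m (Ω \ {x | 0 < w x}) = 0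

end AbsSob

/-! Testing the minimality of `w_{Ωₙ}` against `w_{Ωₙ} ⊔ t|uₙ|` gives
`∫ (t|uₙ| - w_{Ωₙ})⁺ ≤ t² ‖uₙ‖²_H / 2`. The left side is `L¹`-continuous in `(uₙ, w_{Ωₙ})`, and
on a finite measure space `L²` convergence implies `L¹` convergence, so `∫ (t|u| - w)⁺ ≤ t² C / 2`
for every `t > 0`. On `{w ≤ 0}` the integrand dominates `t|u|`, hence `∫_{w ≤ 0} |u| ≤ t C / 2`
for every `t > 0`, and `u = 0` a.e. there. -/

open Topology

section PosPartEstimates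

variable {X : Type*} [MeasurableSpace X] {m : Measure X}

lemma integral_abs_le_sqrt_integral_sq_mul [IsFiniteMeasure m] {g : X → ℝ} (hg : MemLp g 2 m) :
    ∫ x, |g x| ∂m ≤ √(∫ x, g x ^ 2 ∂m) * √(m.real Set.univ) := by
  have h := integral_mul_le_Lp_mul_Lq_of_nonneg (μ := m) Real.HolderConjugate.two_two
    (f := fun x => |g x|) (g := fun _ => (1 : ℝ)) (ae_of_all _ fun x => abs_nonneg _)
    (ae_of_all _ fun _ => zero_le_one) (by simpa using hg.norm) (by simpa using memLp_const 1)
  simpa [Real.sqrt_eq_rpow, sq_abs] using h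

lemma tendsto_integral_abs_of_tendsto_integral_sq [IsFiniteMeasure m] {g : ℕ → X → ℝ}
    (hg : ∀ n, MemLp (g n) 2 m) (h : Tendsto (fun n => ∫ x, g n x ^ 2 ∂m) atTop (𝓝 0)) :
    Tendsto (fun n => ∫ x, |g n x| ∂m) atTop (𝓝 0) := by
  have hbound : Tendsto (fun n => √(∫ x, g n x ^ 2 ∂m) * √(m.real Set.univ)) atTop (𝓝 0) := by
    simpa using (h.sqrt).mul_const √(m.real Set.univ)
  exact squeeze_zero (fun n => integral_nonneg fun x => abs_nonneg _)
    (fun n => integral_abs_le_sqrt_integral_sq_mul (hg n)) hbound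

lemma posPart_mul_abs_sub_le (t a b a' b' : ℝ) :
    max (t * |a| - b) 0 ≤ max (t * |a'| - b') 0 + (|t| * |a' - a| + |b' - b|) := by
  have hlip : t * |a| - t * |a'| ≤ |t| * |a' - a| := by
    calc t * |a| - t * |a'| = t * (|a| - |a'|) := (mul_sub _ _ _).symm
      _ ≤ |t| * abs (|a| - |a'|) := (le_abs_self _).trans (abs_mul _ _).le
      _ ≤ |t| * |a' - a| := by
        rw [abs_sub_comm a']
        exact mul_le_mul_of_nonneg_left (abs_abs_sub_abs_le_abs_sub _ _) (abs_nonneg t)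
  refine max_le ?_ (by positivity)
  linarith [le_max_left (t * |a'| - b') 0, le_abs_self (b' - b)]

lemma integral_posPart_mul_abs_sub_le_of_tendsto [IsFiniteMeasure m] {t K : ℝ}
    {f g : X → ℝ} {fn gn : ℕ → X → ℝ} (hf : MemLp f 2 m) (hg : MemLp g 2 m)
    (hfn : ∀ n, MemLp (fn n) 2 m) (hgn : ∀ n, MemLp (gn n) 2 m)
    (hfconv : Tendsto (fun n => ∫ x, (fn n x - f x) ^ 2 ∂m) atTop (𝓝 0))
    (hgconv : Tendsto (fun n => ∫ x, (gn n x - g x) ^ 2 ∂m) atTop (𝓝 0))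
    (hK : ∀ n, ∫ x, max (t * |fn n x| - gn n x) 0 ∂m ≤ K) :
    ∫ x, max (t * |f x| - g x) 0 ∂m ≤ K := by
  have hint : ∀ {h : X → ℝ}, MemLp h 2 m → Integrable h m := fun hh => hh.integrable one_le_two
  have hbound : ∀ n, ∫ x, max (t * |f x| - g x) 0 ∂m ≤
      K + (|t| * ∫ x, |fn n x - f x| ∂m + ∫ x, |gn n x - g x| ∂m) := by
    intro n
    have hdf : Integrable (fun x => |fn n x - f x|) m := (hint ((hfn n).sub hf)).abs
    have hdg : Integrable (fun x => |gn n x - g x|) m := (hint ((hgn n).sub hg)).abs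
    have hpos : Integrable (fun x => max (t * |fn n x| - gn n x) 0) m :=
      (((hint (hfn n)).abs.const_mul t).sub (hint (hgn n))).pos_part
    have hrest : Integrable (fun x => |t| * |fn n x - f x| + |gn n x - g x|) m :=
      (hdf.const_mul _).add hdg
    calc ∫ x, max (t * |f x| - g x) 0 ∂m
        ≤ ∫ x, (max (t * |fn n x| - gn n x) 0
            + (|t| * |fn n x - f x| + |gn n x - g x|)) ∂m :=
          integral_mono (((hint hf).abs.const_mul t).sub (hint hg)).pos_part
            (hpos.add hrest) fun x => posPart_mul_abs_sub_le _ _ _ _ _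
      _ = ∫ x, max (t * |fn n x| - gn n x) 0 ∂m
            + (|t| * ∫ x, |fn n x - f x| ∂m + ∫ x, |gn n x - g x| ∂m) := by
          rw [integral_add hpos hrest, integral_add (hdf.const_mul _) hdg,
            integral_const_mul]
      _ ≤ _ := by gcongr; exact hK n
  have hlim : Tendsto (fun n => K + (|t| * ∫ x, |fn n x - f x| ∂m + ∫ x, |gn n x - g x| ∂m))
      atTop (𝓝 K) := by
    have hf1 := tendsto_integral_abs_of_tendsto_integral_sq (fun n => (hfn n).sub hf) hfconv
    have hg1 := tendsto_integral_abs_of_tendsto_integral_sq (fun n => (hgn n).sub hg) hgconv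
    simpa using tendsto_const_nhds.add ((hf1.const_mul |t|).add hg1)
  exact ge_of_tendsto' hlim hbound

lemma le_zero_of_forall_pos_le_mul {a K : ℝ} (h : ∀ t : ℝ, 0 < t → a ≤ t * K) : a ≤ 0 := by
  have hlim : Tendsto (fun t : ℝ => t * K) (𝓝[>] 0) (𝓝 0) :=
    ((continuous_mul_const K).tendsto' 0 0 (zero_mul K)).mono_left nhdsWithin_le_nhds
  exact ge_of_tendsto hlim (eventually_nhdsWithin_of_forall h)

lemma ae_eq_zero_of_integral_posPart_mul_abs_sub_le {u w : X → ℝ} {K : ℝ}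
    (hu : Integrable u m) (hw : Integrable w m)
    (h : ∀ t : ℝ, 0 < t → ∫ x, max (t * |u x| - w x) 0 ∂m ≤ t ^ 2 * K) :
    ∀ᵐ x ∂m, ¬ 0 < w x → u x = 0 := by
  set s := {x | w x ≤ 0}
  have hs : NullMeasurableSet s m := nullMeasurableSet_le hw.aemeasurable aemeasurable_const
  have hset : ∀ t : ℝ, 0 < t → ∫ x in s, |u x| ∂m ≤ t * K := by
    intro t ht
    have hpos : Integrable (fun x => max (t * |u x| - w x) 0) m :=
      ((hu.abs.const_mul t).sub hw).pos_part
    have hmono : ∫ x in s, t * |u x| ∂m ≤ ∫ x in s, max (t * |u x| - w x) 0 ∂m := by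
      refine setIntegral_mono_ae_restrict (hu.abs.const_mul t).integrableOn hpos.integrableOn ?_
      filter_upwards [(ae_restrict_iff'₀ hs).mpr (ae_of_all _ fun x hx => hx)] with x hx
      exact le_max_of_le_left (by linarith [hx.out])
    have hmul : t * ∫ x in s, |u x| ∂m ≤ t * (t * K) := by
      calc t * ∫ x in s, |u x| ∂m = ∫ x in s, t * |u x| ∂m := (integral_const_mul _ _).symm
        _ ≤ ∫ x, max (t * |u x| - w x) 0 ∂m :=
          hmono.trans (setIntegral_le_integral hpos (ae_of_all _ fun x => le_max_right _ _))
        _ ≤ t * (t * K) := by linarith [h t ht]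
    exact le_of_mul_le_mul_left hmul ht
  have hzero : ∫ x in s, |u x| ∂m = 0 :=
    le_antisymm (le_zero_of_forall_pos_le_mul hset) (integral_nonneg fun x => abs_nonneg _)
  have hae := (setIntegral_eq_zero_iff_of_nonneg_ae (ae_of_all _ fun x => abs_nonneg (u x))
    hu.abs.integrableOn).mp hzero
  filter_upwards [(ae_restrict_iff'₀ hs).mp hae] with x hx hwx
  exact abs_eq_zero.mp (hx (not_lt.mp hwx))

end PosPartEstimates

namespace AbsSob

variable {X : Type*} [MeasurableSpace X] {m : Measure X} (S : Setting X m)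

namespace Setting

lemma abs_mem {u : X → ℝ} (hu : u ∈ S.H) : |u| ∈ S.H := by
  simpa [abs] using S.sup_mem hu (S.smul_mem (-1) hu)

lemma ae_D_abs {u : X → ℝ} (hu : u ∈ S.H) : ∀ᵐ x ∂m, S.D |u| x = S.D u x := by
  have hneg : -u ∈ S.H := by simpa using S.smul_mem (-1) hu
  filter_upwards [S.D3 (-1) hu, S.D4 hu hneg] with x hD3 hD4
  simp only [neg_one_smul, abs_neg, abs_one, one_mul] at hD3
  rw [abs, hD4]
  split_ifs
  · rfl
  · exact hD3

lemma ae_D_smul_sq (c : ℝ) {u : X → ℝ} (hu : u ∈ S.H) :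
    ∀ᵐ x ∂m, S.D (c • u) x ^ 2 = c ^ 2 * S.D u x ^ 2 := by
  filter_upwards [S.D3 c hu] with x hx
  rw [hx, mul_pow, sq_abs]

end Setting

lemma normHsq_smul (c : ℝ) {u : X → ℝ} (hu : u ∈ S.H) :
    normHsq S (c • u) = c ^ 2 * normHsq S u := by
  simp only [normHsq, integral_congr_ae (S.ae_D_smul_sq c hu), Pi.smul_apply, smul_eq_mul,
    mul_pow, integral_const_mul, mul_add]

lemma normHsq_abs {u : X → ℝ} (hu : u ∈ S.H) : normHsq S |u| = normHsq S u := by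
  have hD : (fun x => S.D |u| x ^ 2) =ᵐ[m] fun x => S.D u x ^ 2 := by
    filter_upwards [S.ae_D_abs hu] with x hx
    rw [hx]
  simp only [normHsq, integral_congr_ae hD, Pi.abs_apply, sq_abs]

lemma smul_mem_H0 (c : ℝ) {A : Set X} {u : X → ℝ} (hu : u ∈ H0 S A) : c • u ∈ H0 S A :=
  ⟨S.smul_mem c hu.1, by filter_upwards [hu.2] with x hx hxA; simp [hx hxA]⟩

lemma abs_mem_H0 {A : Set X} {u : X → ℝ} (hu : u ∈ H0 S A) : |u| ∈ H0 S A :=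
  ⟨S.abs_mem hu.1, by filter_upwards [hu.2] with x hx hxA; simp [hx hxA]⟩

lemma sup_mem_H0 {A : Set X} {u v : X → ℝ} (hu : u ∈ H0 S A) (hv : v ∈ H0 S A) :
    u ⊔ v ∈ H0 S A :=
  ⟨S.sup_mem hu.1 hv.1, by filter_upwards [hu.2, hv.2] with x hux hvx hxA; simp [hux hxA, hvx hxA]⟩

lemma normHsq_eq_integral {u : X → ℝ} (hu : u ∈ S.H) :
    normHsq S u = ∫ x, (u x ^ 2 + S.D u x ^ 2) ∂m :=
  (integral_add (S.memL2 hu).integrable_sq (S.gradL2 hu).integrable_sq).symm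

section Energy

variable [IsFiniteMeasure m]

lemma F_one_one_eq_integral {u : X → ℝ} (hu : u ∈ S.H) :
    F S 1 (fun _ => 1) u = ∫ x, (S.D u x ^ 2 / 2 + u x ^ 2 / 2 - u x) ∂m := by
  have hD := (S.gradL2 hu).integrable_sq.div_const 2
  have hu2 := (S.memL2 hu).integrable_sq.div_const 2
  have hsum : Integrable (fun x => S.D u x ^ 2 / 2 + u x ^ 2 / 2) m := hD.add hu2
  rw [integral_sub hsum ((S.memL2 hu).integrable one_le_two), integral_add hD hu2,
    integral_div, integral_div, F]
  simp only [one_mul]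
  ring

lemma F_sup_add_integral_posPart_sub_le {w v : X → ℝ} (hw : w ∈ S.H) (hv : v ∈ S.H) :
    F S 1 (fun _ => 1) (w ⊔ v) + ∫ x, max (v x - w x) 0 ∂m
      ≤ F S 1 (fun _ => 1) w + normHsq S v / 2 := by
  have hz := S.sup_mem hw hv
  have hint : ∀ {u}, u ∈ S.H → Integrable (fun x => S.D u x ^ 2 / 2 + u x ^ 2 / 2 - u x) m :=
    fun hu => (((S.gradL2 hu).integrable_sq.div_const 2).add
      ((S.memL2 hu).integrable_sq.div_const 2)).sub ((S.memL2 hu).integrable one_le_two)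
  have hpos : Integrable (fun x => max (v x - w x) 0) m :=
    (((S.memL2 hv).integrable one_le_two).sub ((S.memL2 hw).integrable one_le_two)).pos_part
  have hnorm : Integrable (fun x => (v x ^ 2 + S.D v x ^ 2) / 2) m :=
    ((S.memL2 hv).integrable_sq.add (S.gradL2 hv).integrable_sq).div_const 2
  rw [F_one_one_eq_integral S hz, F_one_one_eq_integral S hw, normHsq_eq_integral S hv,
    ← integral_add (hint hz) hpos, ← integral_div, ← integral_add (hint hw) hnorm]
  refine integral_mono_ae ((hint hz).add hpos) ((hint hw).add hnorm) ?_
  filter_upwards [S.D4 hw hv] with x hD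
  simp only [Pi.sup_apply] at hD ⊢
  rcases lt_or_ge (v x) (w x) with hlt | hle
  · rw [hD, if_pos hlt, sup_of_le_left hlt.le, max_eq_right (by linarith)]
    nlinarith [sq_nonneg (v x), sq_nonneg (S.D v x)]
  · rw [hD, if_neg hle.not_gt, sup_of_le_right hle, max_eq_left (by linarith)]
    nlinarith [sq_nonneg (w x), sq_nonneg (S.D w x)]

lemma integral_posPart_sub_le_of_isMinimizer {A : Set X} {w v : X → ℝ}
    (hw : IsMinimizer S A 1 (fun _ => 1) w) (hv : v ∈ H0 S A) :
    ∫ x, max (v x - w x) 0 ∂m ≤ normHsq S v / 2 := by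
  have hmin := hw.2 (w ⊔ v) (sup_mem_H0 S hw.1 hv)
  linarith [F_sup_add_integral_posPart_sub_le S hw.1.1 hv.1]

lemma integral_posPart_mul_abs_sub_le_of_isMinimizer {A : Set X} {w u : X → ℝ}
    (hw : IsMinimizer S A 1 (fun _ => 1) w) (hu : u ∈ H0 S A) (t : ℝ) :
    ∫ x, max (t * |u x| - w x) 0 ∂m ≤ t ^ 2 * (normHsq S u / 2) := by
  have h := integral_posPart_sub_le_of_isMinimizer S hw (smul_mem_H0 S t (abs_mem_H0 S hu))
  rwa [normHsq_smul S t (S.abs_mem hu.1), normHsq_abs S hu.1, mul_div_assoc] at h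

end Energy

theorem statement_13_general {X : Type*} [MeasurableSpace X] {m : Measure X} [IsFiniteMeasure m]
    (S : Setting X m) (Ω : ℕ → Set X)
    (wn : ℕ → X → ℝ) (hwn : ∀ n, IsMinimizer S (Ω n) 1 (fun _ => 1) (wn n))
    {w : X → ℝ} (hwH : w ∈ S.H)
    (hconv : Tendsto (fun n => ∫ x, (wn n x - w x) ^ 2 ∂m) atTop (nhds 0))
    (un : ℕ → X → ℝ) (hun : ∀ n, un n ∈ H0 S (Ω n))
    (hbd : ∃ C : ℝ, ∀ n, normHsq S (un n) ≤ C)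
    {u : X → ℝ} (huH : u ∈ S.H)
    (huconv : Tendsto (fun n => ∫ x, (un n x - u x) ^ 2 ∂m) atTop (nhds 0)) :
    u ∈ H0 S {x | 0 < w x} := by
  obtain ⟨C, hC⟩ := hbd
  have hbound : ∀ t n, ∫ x, max (t * |un n x| - wn n x) 0 ∂m ≤ t ^ 2 * (C / 2) := fun t n =>
    (integral_posPart_mul_abs_sub_le_of_isMinimizer S (hwn n) (hun n) t).trans
      (by gcongr; exact hC n)
  have hlimit : ∀ t, ∫ x, max (t * |u x| - w x) 0 ∂m ≤ t ^ 2 * (C / 2) := fun t =>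
    integral_posPart_mul_abs_sub_le_of_tendsto (S.memL2 huH) (S.memL2 hwH)
      (fun n => S.memL2 (hun n).1) (fun n => S.memL2 (hwn n).1.1) huconv hconv (hbound t)
  exact ⟨huH, ae_eq_zero_of_integral_posPart_mul_abs_sub_le ((S.memL2 huH).integrable one_le_two)
    ((S.memL2 hwH).integrable one_le_two) fun t _ => hlimit t⟩

/-- Mosco-type closedness: if `Ωₙ` weak-γ-converges to `Ω = {w > 0}`
and `uₙ ∈ H₀(Ωₙ)` is bounded in `H` and `L²`-converges to `u ∈ H`, then `u ∈ H₀(Ω)`. -/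
theorem statement_13 {X : Type*} [MeasurableSpace X] {m : Measure X} [IsFiniteMeasure m]
    (S : Setting X m) (hcpt : CompactEmbedding S) (hlsc : GradLSC S)
    (Ω : ℕ → Set X) (hΩ : ∀ n, MeasurableSet (Ω n))
    (wn : ℕ → X → ℝ) (hwn : ∀ n, IsMinimizer S (Ω n) 1 (fun _ => 1) (wn n))
    (hEn : ∀ n, m (Ω n \ {x | 0 < wn n x}) = 0)
    {w : X → ℝ} (hwH : w ∈ S.H)
    (hconv : Tendsto (fun n => ∫ x, (wn n x - w x) ^ 2 ∂m) atTop (nhds 0))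
    (un : ℕ → X → ℝ) (hun : ∀ n, un n ∈ H0 S (Ω n))
    (hbd : ∃ C : ℝ, ∀ n, normHsq S (un n) ≤ C)
    {u : X → ℝ} (huH : u ∈ S.H)
    (huconv : Tendsto (fun n => ∫ x, (un n x - u x) ^ 2 ∂m) atTop (nhds 0)) :
    u ∈ H0 S {x | 0 < w x} :=
  statement_13_general S Ω wn hwn hwH hconv un hun hbd huH huconv

end AbsSob
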